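/- arXiv:2306.08282 — 2 statements merged into one kernel-verified Lean document; each statement's English description precedes it below -/
import Mathlib

section
/- The function φ is strictly increasing and concave on [a,∞), satisfies φ(a) = a, is differentiable on (a,∞) with φ'(u) = 1/F̃(u), and φ(u) → ∞ as u → ∞ (equivalently ∫_a^∞ dt/F̃(t) = ∞); consequently φ is a bijection of [a,∞) onto itself. -/
open Real MeasureTheory Filter Topology Set

/-- `F(u) = a - log a + log u`. -/
noncomputable def Fa (a : ℝ) : ℝ → ℝ := fun u => a - Real.log a + Real.log u

/-- `F̃(u) = a · ∏_{k=0}^∞ (F^k(u)/a)`. -/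
noncomputable def Ftilde (a : ℝ) (u : ℝ) : ℝ := a * ∏' k : ℕ, ((Fa a)^[k] u / a)

/-- `φ(u) = a + ∫_a^u dt / F̃(t)`. -/
noncomputable def phiFun (a : ℝ) (u : ℝ) : ℝ := a + ∫ t in a..u, 1 / Ftilde a t

/-! Since `F(v) - a = log (v / a)`, the `k`-th factor of the product is `exp (F^{k+1}(u) - a)`,
and `log x ≤ x - 1` shows that `F` shrinks the distance to `a` by the factor `1 / a`. So
`F̃ = a · exp (∑ₖ (F^{k+1}(u) - a))` converges to a positive, continuous, increasing function,
and `φ' = 1 / F̃` is positive and decreasing. For the divergence of `φ`, the inverse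
`G(x) = a e^{x-a}` of `F` satisfies `F̃(G x) = G'(x) F̃(x) / a`; substituting `t = G s` gives
`φ(G x) - a = a (φ(x) - a)`, so `φ - a` grows like `a^n` along the orbit of `G`. -/

theorem MonotoneOn.iterate {α : Type*} [Preorder α] {f : α → α} {s : Set α}
    (hf : MonotoneOn f s) (hmaps : MapsTo f s s) : ∀ n, MonotoneOn f^[n] s
  | 0 => monotoneOn_id
  | n + 1 => fun _ hx _ hy hxy => hf.iterate hmaps n (hmaps hx) (hmaps hy) (hf hx hy hxy)

theorem ContinuousOn.surjOn_Ici_of_tendsto_atTop {g : ℝ → ℝ} {a : ℝ}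
    (hg : ContinuousOn g (Ici a)) (htop : Tendsto g atTop atTop) :
    SurjOn g (Ici a) (Ici (g a)) := by
  intro y hy
  obtain ⟨b, hyb, hab⟩ := ((htop.eventually_ge_atTop y).and (eventually_ge_atTop a)).exists
  exact hg.surjOn_Icc self_mem_Ici hab ⟨hy, hyb⟩

theorem StrictMonoOn.bijOn_Ici_of_tendsto_atTop {g : ℝ → ℝ} {a : ℝ}
    (hmono : StrictMonoOn g (Ici a)) (hg : ContinuousOn g (Ici a))
    (htop : Tendsto g atTop atTop) : BijOn g (Ici a) (Ici (g a)) :=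
  ⟨fun _ hx => hmono.monotoneOn self_mem_Ici hx hx, hmono.injOn,
    hg.surjOn_Ici_of_tendsto_atTop htop⟩

section PrimitiveOnIci

variable {f : ℝ → ℝ} {a : ℝ}

theorem ContinuousOn.intervalIntegrable_of_Ici (hf : ContinuousOn f (Ici a)) {x y : ℝ}
    (hx : a ≤ x) (hy : a ≤ y) : IntervalIntegrable f volume x y :=
  (hf.mono fun _ ht => (le_inf hx hy).trans ht.1).intervalIntegrable

theorem ContinuousOn.stronglyMeasurableAtFilter_of_Ici (hf : ContinuousOn f (Ici a))
    {l : Filter ℝ} (hl : Ici a ∈ l) : StronglyMeasurableAtFilter f l volume :=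
  ⟨Ici a, hl, hf.aestronglyMeasurable measurableSet_Ici⟩

theorem ContinuousOn.hasDerivAt_const_add_integral_of_Ici (c : ℝ) (hf : ContinuousOn f (Ici a))
    {u : ℝ} (hu : a < u) : HasDerivAt (fun v => c + ∫ t in a..v, f t) (f u) u :=
  (intervalIntegral.integral_hasDerivAt_right (hf.intervalIntegrable_of_Ici le_rfl hu.le)
    (hf.stronglyMeasurableAtFilter_of_Ici (Ici_mem_nhds hu))
    (hf.continuousAt (Ici_mem_nhds hu))).const_add c

theorem ContinuousOn.continuousOn_const_add_integral_of_Ici (c : ℝ)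
    (hf : ContinuousOn f (Ici a)) : ContinuousOn (fun v => c + ∫ t in a..v, f t) (Ici a) := by
  intro x hx
  obtain rfl | hax := (mem_Ici.mp hx).eq_or_lt
  · have hright : HasDerivWithinAt (fun v => ∫ t in a..v, f t) (f a) (Ici a) a :=
      intervalIntegral.integral_hasDerivWithinAt_right (t := Ioi a)
        (hf.intervalIntegrable_of_Ici le_rfl le_rfl)
        (hf.stronglyMeasurableAtFilter_of_Ici
          (mem_of_superset self_mem_nhdsWithin Ioi_subset_Ici_self))
        ((hf a hx).mono Ioi_subset_Ici_self)
    exact (hright.const_add c).continuousWithinAt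
  · exact (hf.hasDerivAt_const_add_integral_of_Ici c hax).continuousAt.continuousWithinAt

theorem ContinuousOn.strictMonoOn_const_add_integral_of_Ici (c : ℝ)
    (hf : ContinuousOn f (Ici a)) (hpos : ∀ t ∈ Ioi a, 0 < f t) :
    StrictMonoOn (fun v => c + ∫ t in a..v, f t) (Ici a) := by
  refine strictMonoOn_of_hasDerivWithinAt_pos (f' := f) (convex_Ici a)
    (hf.continuousOn_const_add_integral_of_Ici c) ?_ ?_ <;> rw [interior_Ici]
  · exact fun u hu => (hf.hasDerivAt_const_add_integral_of_Ici c hu).hasDerivWithinAt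
  · exact hpos

theorem ContinuousOn.concaveOn_const_add_integral_of_Ici (c : ℝ)
    (hf : ContinuousOn f (Ici a)) (hanti : AntitoneOn f (Ioi a)) :
    ConcaveOn ℝ (Ici a) (fun v => c + ∫ t in a..v, f t) := by
  have hderiv := fun u (hu : u ∈ Ioi a) => hf.hasDerivAt_const_add_integral_of_Ici c hu
  refine AntitoneOn.concaveOn_of_deriv (convex_Ici a)
    (hf.continuousOn_const_add_integral_of_Ici c) ?_ ?_ <;> rw [interior_Ici]
  · exact fun u hu => (hderiv u hu).differentiableAt.differentiableWithinAt
  · exact hanti.congr fun u hu => (hderiv u hu).deriv.symm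

end PrimitiveOnIci

noncomputable def FaInv (a x : ℝ) : ℝ := a * exp (x - a)

section Iteration

variable {a : ℝ}

theorem Fa_sub_self (ha : 0 < a) {u : ℝ} (hu : 0 < u) : Fa a u - a = log (u / a) := by
  rw [Fa, log_div hu.ne' ha.ne']
  ring

theorem exp_Fa_sub_self (ha : 0 < a) {u : ℝ} (hu : 0 < u) : exp (Fa a u - a) = u / a := by
  rw [Fa_sub_self ha hu, exp_log (div_pos hu ha)]

theorem Fa_sub_self_le (ha : 0 < a) {u : ℝ} (hu : 0 < u) : Fa a u - a ≤ (u - a) * a⁻¹ := by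
  rw [Fa_sub_self ha hu, sub_mul, mul_inv_cancel₀ ha.ne', ← div_eq_mul_inv]
  exact log_le_sub_one_of_pos (div_pos hu ha)

theorem monotoneOn_Fa (a : ℝ) : MonotoneOn (Fa a) (Ioi 0) := fun _ hu _ _ huv => by
  simp only [Fa]
  gcongr

theorem mapsTo_Fa (ha : 0 < a) : MapsTo (Fa a) (Ici a) (Ici a) := fun u hu => by
  have : 0 ≤ log (u / a) := log_nonneg ((one_le_div ha).mpr hu)
  have := Fa_sub_self ha (ha.trans_le hu)
  simp only [mem_Ici]
  linarith

theorem continuousOn_Fa (ha : 0 < a) : ContinuousOn (Fa a) (Ici a) :=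
  continuousOn_const.add (continuousOn_log.mono fun _ hu => (ha.trans_le hu).ne')

theorem Fa_iterate_sub_self_le (ha : 0 < a) {u : ℝ} (hu : a ≤ u) (k : ℕ) :
    (Fa a)^[k] u - a ≤ (u - a) * a⁻¹ ^ k := by
  induction k with
  | zero => simp
  | succ k ih =>
    rw [Function.iterate_succ_apply', pow_succ, ← mul_assoc]
    calc Fa a ((Fa a)^[k] u) - a ≤ ((Fa a)^[k] u - a) * a⁻¹ :=
          Fa_sub_self_le ha (ha.trans_le ((mapsTo_Fa ha).iterate k hu))
      _ ≤ (u - a) * a⁻¹ ^ k * a⁻¹ := by gcongr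

theorem FaInv_self (a : ℝ) : FaInv a a = a := by simp [FaInv]

theorem Fa_FaInv (ha : 0 < a) (x : ℝ) : Fa a (FaInv a x) = x := by
  rw [Fa, FaInv, log_mul ha.ne' (exp_pos _).ne', log_exp]
  ring

theorem hasDerivAt_FaInv (a x : ℝ) : HasDerivAt (FaInv a) (FaInv a x) x := by
  unfold FaInv
  simpa using (((hasDerivAt_id x).sub_const a).exp).const_mul a

theorem mapsTo_FaInv (ha : 0 < a) : MapsTo (FaInv a) (Ici a) (Ici a) := fun _ hx =>
  le_mul_of_one_le_right ha.le (one_le_exp (sub_nonneg.mpr hx))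

end Iteration

/-- `log (F̃(u) / a)`, written with `log (F^k(u) / a) = F^{k+1}(u) - a`. -/
noncomputable def ftildeExponent (a u : ℝ) : ℝ := ∑' k : ℕ, ((Fa a)^[k + 1] u - a)

section Ftilde

variable {a : ℝ}

theorem summable_mul_inv_pow_succ (ha : 1 < a) (c : ℝ) :
    Summable fun k : ℕ => c * a⁻¹ ^ (k + 1) :=
  ((summable_geometric_of_lt_one (by positivity) (inv_lt_one_of_one_lt₀ ha)).mul_left
    c).comp_injective (add_left_injective 1)

theorem summable_Fa_iterate_sub_self (ha : 1 < a) {u : ℝ} (hu : a ≤ u) :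
    Summable fun k : ℕ => (Fa a)^[k + 1] u - a :=
  (summable_mul_inv_pow_succ ha (u - a)).of_nonneg_of_le
    (fun k => sub_nonneg.mpr ((mapsTo_Fa (by linarith)).iterate (k + 1) hu))
    (fun k => Fa_iterate_sub_self_le (by linarith) hu (k + 1))

theorem hasProd_Fa_iterate_div (ha : 1 < a) {u : ℝ} (hu : a ≤ u) :
    HasProd (fun k : ℕ => (Fa a)^[k] u / a) (exp (ftildeExponent a u)) := by
  have ha0 : 0 < a := by linarith
  rw [ftildeExponent]
  convert (summable_Fa_iterate_sub_self ha hu).hasSum.rexp using 2 with k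
  rw [Function.comp_apply, Function.iterate_succ_apply',
    exp_Fa_sub_self ha0 (ha0.trans_le ((mapsTo_Fa ha0).iterate k hu))]

theorem Ftilde_eq_mul_exp (ha : 1 < a) {u : ℝ} (hu : a ≤ u) :
    Ftilde a u = a * exp (ftildeExponent a u) := by
  rw [Ftilde, (hasProd_Fa_iterate_div ha hu).tprod_eq]

theorem Ftilde_pos (ha : 1 < a) {u : ℝ} (hu : a ≤ u) : 0 < Ftilde a u := by
  rw [Ftilde_eq_mul_exp ha hu]
  have : 0 < a := by linarith
  positivity

theorem monotoneOn_Ftilde (ha : 1 < a) : MonotoneOn (Ftilde a) (Ici a) := by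
  have ha0 : 0 < a := by linarith
  have hmono := ((monotoneOn_Fa a).mono (Ici_subset_Ioi.mpr ha0)).iterate (mapsTo_Fa ha0)
  intro u hu v hv huv
  rw [Ftilde_eq_mul_exp ha hu, Ftilde_eq_mul_exp ha hv]
  gcongr
  exact (summable_Fa_iterate_sub_self ha hu).tsum_le_tsum
    (fun k => sub_le_sub_right (hmono (k + 1) hu hv huv) a) (summable_Fa_iterate_sub_self ha hv)

theorem continuousOn_ftildeExponent (ha : 1 < a) : ContinuousOn (ftildeExponent a) (Ici a) := by
  have ha0 : 0 < a := by linarith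
  refine continuousOn_of_locally_continuousOn fun x _ =>
    ⟨Iio (x + 1), isOpen_Iio, lt_add_one x, ?_⟩
  refine continuousOn_tsum (u := fun k => (x + 1 - a) * a⁻¹ ^ (k + 1))
    (fun k => ?_) (summable_mul_inv_pow_succ ha _) (fun k t ht => ?_)
  · exact (((continuousOn_Fa ha0).iterate (mapsTo_Fa ha0) (k + 1)).mono
      inter_subset_left).sub continuousOn_const
  · rw [Real.norm_of_nonneg (sub_nonneg.mpr ((mapsTo_Fa ha0).iterate (k + 1) ht.1))]
    calc (Fa a)^[k + 1] t - a ≤ (t - a) * a⁻¹ ^ (k + 1) := Fa_iterate_sub_self_le ha0 ht.1 _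
      _ ≤ (x + 1 - a) * a⁻¹ ^ (k + 1) := by gcongr; exact ht.2.le

theorem continuousOn_one_div_Ftilde (ha : 1 < a) :
    ContinuousOn (fun t => 1 / Ftilde a t) (Ici a) := by
  have hFtilde : ContinuousOn (Ftilde a) (Ici a) :=
    (continuousOn_const.mul (continuousOn_ftildeExponent ha).rexp).congr
      fun _ hu => Ftilde_eq_mul_exp ha hu
  exact continuousOn_const.div hFtilde fun _ hu => (Ftilde_pos ha hu).ne'

theorem antitoneOn_one_div_Ftilde (ha : 1 < a) :
    AntitoneOn (fun t => 1 / Ftilde a t) (Ici a) := fun _ hu _ hv huv =>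
  one_div_le_one_div_of_le (Ftilde_pos ha hu) (monotoneOn_Ftilde ha hu hv huv)

theorem ftildeExponent_FaInv (ha : 1 < a) {x : ℝ} (hx : a ≤ x) :
    ftildeExponent a (FaInv a x) = x - a + ftildeExponent a x := by
  have hshift : ∀ k, (Fa a)^[k + 1] (FaInv a x) = (Fa a)^[k] x := fun k => by
    rw [Function.iterate_succ_apply, Fa_FaInv (by linarith)]
  have hs : Summable fun k : ℕ => (Fa a)^[k] x - a :=
    (summable_nat_add_iff 1).mp (summable_Fa_iterate_sub_self ha hx)
  rw [ftildeExponent, ftildeExponent]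
  simp only [hshift]
  rw [hs.tsum_eq_zero_add, Function.iterate_zero_apply]

theorem Ftilde_FaInv (ha : 1 < a) {x : ℝ} (hx : a ≤ x) :
    Ftilde a (FaInv a x) = FaInv a x * Ftilde a x / a := by
  have ha0 : 0 < a := by linarith
  rw [Ftilde_eq_mul_exp ha ((mapsTo_FaInv ha0) hx), Ftilde_eq_mul_exp ha hx,
    ftildeExponent_FaInv ha hx, exp_add, FaInv]
  field_simp

end Ftilde

section Phi

variable {a : ℝ}

theorem phiFun_self (a : ℝ) : phiFun a a = a := by simp [phiFun]

theorem strictMonoOn_phiFun (ha : 1 < a) : StrictMonoOn (phiFun a) (Ici a) :=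
  (continuousOn_one_div_Ftilde ha).strictMonoOn_const_add_integral_of_Ici a
    fun _ ht => one_div_pos.mpr (Ftilde_pos ha ht.le)

theorem integral_one_div_Ftilde_FaInv (ha : 1 < a) {x : ℝ} (hx : a ≤ x) :
    ∫ t in a..FaInv a x, 1 / Ftilde a t = a * ∫ t in a..x, 1 / Ftilde a t := by
  have ha0 : 0 < a := by linarith
  have hsubst := intervalIntegral.integral_comp_mul_deriv' (a := a) (b := x)
    (fun s _ => hasDerivAt_FaInv a s)
    (fun s _ => (hasDerivAt_FaInv a s).continuousAt.continuousWithinAt)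
    ((continuousOn_one_div_Ftilde ha).mono ?_)
  · rw [FaInv_self] at hsubst
    rw [← hsubst, ← intervalIntegral.integral_const_mul]
    refine intervalIntegral.integral_congr fun s hs => ?_
    rw [uIcc_of_le hx] at hs
    simp only [Function.comp_apply, Ftilde_FaInv ha hs.1]
    field_simp [(Ftilde_pos ha hs.1).ne', (ha0.trans_le (mapsTo_FaInv ha0 hs.1)).ne']
  · rintro _ ⟨s, hs, rfl⟩
    rw [uIcc_of_le hx] at hs
    exact mapsTo_FaInv ha0 hs.1

theorem phiFun_FaInv_iterate_sub_self (ha : 1 < a) {x : ℝ} (hx : a ≤ x) (n : ℕ) :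
    phiFun a ((FaInv a)^[n] x) - a = a ^ n * (phiFun a x - a) := by
  induction n with
  | zero => simp
  | succ n ih =>
    have hxn : a ≤ (FaInv a)^[n] x := (mapsTo_FaInv (by linarith)).iterate n hx
    rw [Function.iterate_succ_apply', pow_succ, mul_comm _ a, mul_assoc, ← ih]
    simp only [phiFun, integral_one_div_Ftilde_FaInv ha hxn]
    ring

theorem tendsto_phiFun_atTop (ha : 1 < a) : Tendsto (phiFun a) atTop atTop := by
  have hmono := strictMonoOn_phiFun ha
  have hstart : a ≤ a + 1 := by linarith
  have hpos : 0 < phiFun a (a + 1) - a := by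
    have := hmono self_mem_Ici hstart (lt_add_one a)
    rw [phiFun_self] at this
    linarith
  rw [tendsto_atTop]
  intro M
  obtain ⟨n, hn⟩ := (((tendsto_pow_atTop_atTop_of_one_lt ha).atTop_mul_const
    hpos).eventually_ge_atTop (M - a)).exists
  have hxn : a ≤ (FaInv a)^[n] (a + 1) := (mapsTo_FaInv (by linarith)).iterate n hstart
  filter_upwards [eventually_ge_atTop ((FaInv a)^[n] (a + 1))] with u hu
  have hle := hmono.monotoneOn hxn (hxn.trans hu) hu
  have horbit := phiFun_FaInv_iterate_sub_self ha hstart n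
  linarith

end Phi

/-- `φ` is strictly increasing and concave on `[a,∞)`, `φ(a) = a`, `φ` is differentiable
on `(a,∞)` with `φ'(u) = 1/F̃(u)`, and `φ(u) → ∞` as `u → ∞`; consequently `φ` is a
bijection of `[a,∞)` onto itself. -/
theorem stmt3 (a : ℝ) (ha : 1 < a) :
    StrictMonoOn (phiFun a) (Set.Ici a) ∧
    ConcaveOn ℝ (Set.Ici a) (phiFun a) ∧
    phiFun a a = a ∧
    (∀ u : ℝ, a < u → HasDerivAt (phiFun a) (1 / Ftilde a u) u) ∧
    Filter.Tendsto (phiFun a) Filter.atTop Filter.atTop ∧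
    Set.BijOn (phiFun a) (Set.Ici a) (Set.Ici a) := by
  have hcont := continuousOn_one_div_Ftilde ha
  have htop := tendsto_phiFun_atTop ha
  refine ⟨strictMonoOn_phiFun ha,
    hcont.concaveOn_const_add_integral_of_Ici a
      ((antitoneOn_one_div_Ftilde ha).mono Ioi_subset_Ici_self),
    phiFun_self a, fun u hu => hcont.hasDerivAt_const_add_integral_of_Ici a hu, htop, ?_⟩
  simpa only [phiFun_self] using (strictMonoOn_phiFun ha).bijOn_Ici_of_tendsto_atTop
    (hcont.continuousOn_const_add_integral_of_Ici a) htop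
end

section
/- Let g be admissible and let u, v : ℝ^n → ℝ be Lebesgue measurable with μ_g[u](t) < ∞ and μ_g[v](t) < ∞ for every t > 0. Then the Hardy–Littlewood-type inequality ∫_{ℝ^n} |u(x)·v(x)| g(x) dx ≤ ∫_{ℝ^n} R_g[u](x)·R_g[v](x) g(x) dx holds. -/
/-!
With `ν = g dx`, the layer-cake formula writes both sides as double integrals over `s, t > 0`,
of `ν({|u| > s} ∩ {|v| > t})` and of the same expression for `R_g[u], R_g[v]`. The first
integrand is at most `c = min (μ_g[u](s), μ_g[v](t))`. Lebesgue-null spheres make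
`r ↦ ν(B_r)` continuous, so the points with `0 < ν(B_{|x|}) < c` carry `ν`-mass exactly `c`,
and at each of them `R_g[u](x) > s` and `R_g[v](x) > t`.
-/

open Real MeasureTheory Filter Topology Set

/-- The measure determined by `g`: `μ_g(A) = ∫_A g(x) dx`. -/
noncomputable def muG (n : ℕ) (g : EuclideanSpace ℝ (Fin n) → ℝ)
    (A : Set (EuclideanSpace ℝ (Fin n))) : ENNReal :=
  ∫⁻ x in A, ENNReal.ofReal (g x)

/-- The distribution function of `u` with respect to `g`:
`μ_g[u](t) = μ_g({x : |u(x)| > t})`. -/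
noncomputable def distG (n : ℕ) (g u : EuclideanSpace ℝ (Fin n) → ℝ) (t : ℝ) : ENNReal :=
  muG n g {x | t < |u x|}

/-- The rearrangement of `u` with respect to `g`:
`R_g[u](x) = sup {t ≥ 0 : μ_g[u](t) > μ_g(B_{|x|})}`. -/
noncomputable def rearrG (n : ℕ) (g u : EuclideanSpace ℝ (Fin n) → ℝ)
    (x : EuclideanSpace ℝ (Fin n)) : ℝ :=
  sSup {t : ℝ | 0 ≤ t ∧ muG n g (Metric.ball 0 ‖x‖) < distG n g u t}

/-- `g` is admissible: locally integrable, radial, continuous away from the origin,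
nonnegative, and nonincreasing in `|x|`. -/
def Admissible (n : ℕ) (g : EuclideanSpace ℝ (Fin n) → ℝ) : Prop :=
  MeasureTheory.LocallyIntegrable g MeasureTheory.volume ∧
  (∀ x y : EuclideanSpace ℝ (Fin n), ‖x‖ = ‖y‖ → g x = g y) ∧
  ContinuousOn g {x : EuclideanSpace ℝ (Fin n) | x ≠ 0} ∧
  (∀ x : EuclideanSpace ℝ (Fin n), x ≠ 0 → 0 ≤ g x) ∧
  (∀ x y : EuclideanSpace ℝ (Fin n), x ≠ 0 → y ≠ 0 → ‖x‖ ≤ ‖y‖ → g y ≤ g x)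

open Metric
open scoped ENNReal

section LayerCake

variable {α : Type*} [MeasurableSpace α] (μ : Measure α)

theorem lintegral_ofReal_mul_ofReal_eq_lintegral_measure_inter {f h : α → ℝ}
    (hf : Measurable f) (hh : Measurable h) (hf0 : ∀ x, 0 ≤ f x) (hh0 : ∀ x, 0 ≤ h x) :
    ∫⁻ x, ENNReal.ofReal (f x) * ENNReal.ofReal (h x) ∂μ
      = ∫⁻ s in Ioi 0, ∫⁻ t in Ioi 0, μ ({x | s < f x} ∩ {x | t < h x}) := by
  have hdensity : ∫⁻ x, ENNReal.ofReal (f x) * ENNReal.ofReal (h x) ∂μ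
      = ∫⁻ x, ENNReal.ofReal (f x) ∂(μ.withDensity fun x => ENNReal.ofReal (h x)) := by
    rw [lintegral_withDensity_eq_lintegral_mul μ hh.ennreal_ofReal hf.ennreal_ofReal]
    simp only [Pi.mul_apply, mul_comm]
  rw [hdensity, lintegral_eq_lintegral_meas_lt _ (ae_of_all _ hf0) hf.aemeasurable]
  refine lintegral_congr fun s => ?_
  rw [withDensity_apply _ (measurableSet_lt measurable_const hf),
    lintegral_eq_lintegral_meas_lt _ (ae_of_all _ hh0) hh.aemeasurable]
  refine lintegral_congr fun t => ?_
  rw [Measure.restrict_apply (measurableSet_lt measurable_const hh), inter_comm]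

theorem lintegral_ofReal_mul_ofReal_le_of_measure_inter_le {f₁ f₂ h₁ h₂ : α → ℝ}
    (hf₁ : Measurable f₁) (hf₂ : Measurable f₂) (hh₁ : Measurable h₁) (hh₂ : Measurable h₂)
    (hf₁0 : ∀ x, 0 ≤ f₁ x) (hf₂0 : ∀ x, 0 ≤ f₂ x)
    (hh₁0 : ∀ x, 0 ≤ h₁ x) (hh₂0 : ∀ x, 0 ≤ h₂ x)
    (hle : ∀ s t : ℝ, 0 < s → 0 < t →
      μ ({x | s < f₁ x} ∩ {x | t < f₂ x}) ≤ μ ({x | s < h₁ x} ∩ {x | t < h₂ x})) :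
    ∫⁻ x, ENNReal.ofReal (f₁ x) * ENNReal.ofReal (f₂ x) ∂μ
      ≤ ∫⁻ x, ENNReal.ofReal (h₁ x) * ENNReal.ofReal (h₂ x) ∂μ := by
  rw [lintegral_ofReal_mul_ofReal_eq_lintegral_measure_inter μ hf₁ hf₂ hf₁0 hf₂0,
    lintegral_ofReal_mul_ofReal_eq_lintegral_measure_inter μ hh₁ hh₂ hh₁0 hh₂0]
  exact setLIntegral_mono' measurableSet_Ioi fun s hs =>
    setLIntegral_mono' measurableSet_Ioi fun t ht => hle s t hs ht

end LayerCake

section DecreasingRearrangement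

variable {α : Type*} [MeasurableSpace α] (μ : Measure α) {f : α → ℝ}

theorem exists_gt_and_lt_measure_lt {s : ℝ} {c : ℝ≥0∞} (hc : c < μ {x | s < f x}) :
    ∃ t, s < t ∧ c < μ {x | t < f x} := by
  obtain ⟨u, hu_anti, hu_gt, hu_lim⟩ := exists_seq_strictAnti_tendsto s
  have hunion : {x | s < f x} = ⋃ k, {x | u k < f x} := by
    ext x
    simp only [mem_ofPred_eq, mem_iUnion]
    exact ⟨fun hx => (hu_lim.eventually (gt_mem_nhds hx)).exists,
      fun ⟨k, hk⟩ => (hu_gt k).trans hk⟩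
  have hmono : Monotone fun k => {x | u k < f x} :=
    fun i j hij x hx => (hu_anti.antitone hij).trans_lt hx
  rw [hunion, hmono.measure_iUnion, lt_iSup_iff] at hc
  obtain ⟨k, hk⟩ := hc
  exact ⟨u k, hu_gt k, hk⟩

theorem tendsto_measure_lt_atTop (hf : Measurable f) (hfin : ∃ t, μ {x | t < f x} ≠ ∞) :
    Tendsto (fun t => μ {x | t < f x}) atTop (𝓝 0) := by
  have hempty : ⋂ t : ℝ, {x | t < f x} = ∅ :=
    eq_empty_of_forall_notMem fun x hx => lt_irrefl (f x) (mem_iInter.1 hx (f x))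
  have h := tendsto_measure_iInter_atTop (μ := μ)
    (fun t => (measurableSet_lt measurable_const hf).nullMeasurableSet)
    (fun s t hst x (hx : t < f x) => hst.trans_lt hx) hfin
  rwa [hempty, measure_empty] at h

/-- `sSup` of an unbounded set is `0`, so the value at `m = 0` is junk when `f` is essentially
unbounded. -/
noncomputable def decreasingRearrangement (f : α → ℝ) (m : ℝ≥0∞) : ℝ :=
  sSup {t | 0 ≤ t ∧ m < μ {x | t < f x}}

theorem decreasingRearrangement_nonneg (m : ℝ≥0∞) : 0 ≤ decreasingRearrangement μ f m :=
  Real.sSup_nonneg fun _ ht => ht.1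

theorem lt_decreasingRearrangement_iff (hf : Measurable f) (hfin : ∃ t, μ {x | t < f x} ≠ ∞)
    {m : ℝ≥0∞} (hm : 0 < m) {s : ℝ} (hs : 0 ≤ s) :
    s < decreasingRearrangement μ f m ↔ m < μ {x | s < f x} := by
  have hanti : ∀ {a b : ℝ}, a ≤ b → μ {x | b < f x} ≤ μ {x | a < f x} :=
    fun hab => measure_mono fun x (hx : _ < f x) => hab.trans_lt hx
  constructor
  · intro hlt
    have hne : {t | 0 ≤ t ∧ m < μ {x | t < f x}}.Nonempty := by
      by_contra hempty
      rw [not_nonempty_iff_eq_empty] at hempty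
      rw [decreasingRearrangement, hempty, Real.sSup_empty] at hlt
      exact hlt.not_ge hs
    obtain ⟨t, ht, hst⟩ := exists_lt_of_lt_csSup hne hlt
    exact ht.2.trans_le (hanti hst.le)
  · intro hlt
    obtain ⟨t₀, ht₀⟩ := ((tendsto_measure_lt_atTop μ hf hfin).eventually_lt_const hm).exists
    have hbdd : BddAbove {t | 0 ≤ t ∧ m < μ {x | t < f x}} :=
      ⟨t₀, fun t ht => le_of_not_gt fun h => (ht.2.trans_le (hanti h.le)).not_gt ht₀⟩
    obtain ⟨t, hst, ht⟩ := exists_gt_and_lt_measure_lt μ hlt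
    exact hst.trans_le (le_csSup hbdd ⟨hs.trans hst.le, ht⟩)

theorem measurable_decreasingRearrangement (hf : Measurable f)
    (hfin : ∃ t, μ {x | t < f x} ≠ ∞) : Measurable (decreasingRearrangement μ f) := by
  refine measurable_of_Ioi fun s => ?_
  rcases lt_or_ge s 0 with hs | hs
  · convert MeasurableSet.univ
    exact eq_univ_of_forall fun m => hs.trans_le (decreasingRearrangement_nonneg μ m)
  · have hpreimage : decreasingRearrangement μ f ⁻¹' Ioi s
        = (decreasingRearrangement μ f ⁻¹' Ioi s ∩ {0}) ∪ Ioo 0 (μ {x | s < f x}) := by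
      ext m
      rcases eq_zero_or_pos m with rfl | hm
      · simp
      · simp [hm, hm.ne', lt_decreasingRearrangement_iff μ hf hfin hm hs]
    rw [hpreimage]
    exact ((subsingleton_singleton.anti inter_subset_right).measurableSet).union measurableSet_Ioo

end DecreasingRearrangement

section BallMass

variable {X : Type*} [PseudoMetricSpace X] [MeasurableSpace X] {ν : Measure X} {x : X} {R : ℝ}
  {c : ℝ≥0∞}

theorem measure_ball_le_of_forall_lt (h : ∀ r < R, ν (ball x r) ≤ c) :
    ν (ball x R) ≤ c := by
  obtain ⟨u, hu_mono, hu_lt, hu_lim⟩ := exists_seq_strictMono_tendsto R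
  have hunion : ball x R = ⋃ k, ball x (u k) := by
    ext y
    simp only [mem_ball, mem_iUnion]
    exact ⟨fun hy => (hu_lim.eventually (lt_mem_nhds hy)).exists,
      fun ⟨k, hk⟩ => hk.trans (hu_lt k)⟩
  rw [hunion, Monotone.measure_iUnion fun i j hij => ball_subset_ball (hu_mono.monotone hij)]
  exact iSup_le fun k => h _ (hu_lt k)

theorem le_measure_closedBall_of_forall_gt [OpensMeasurableSpace X]
    (hfin : ∃ r > R, ν (ball x r) ≠ ∞) (h : ∀ r > R, c ≤ ν (ball x r)) :
    c ≤ ν (closedBall x R) := by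
  have hlim := tendsto_measure_biInter_gt (μ := ν) (s := ball x) (a := R)
    (fun _ _ => measurableSet_ball.nullMeasurableSet)
    (fun _ _ _ hij => ball_subset_ball hij) hfin
  rw [biInter_gt_ball] at hlim
  exact ge_of_tendsto hlim (eventually_nhdsWithin_of_forall h)

end BallMass

section RadialBallMass

variable {E : Type*} [NormedAddCommGroup E] [MeasurableSpace E] [OpensMeasurableSpace E]
  {ν : Measure E}

theorem measure_setOf_measure_ball_norm_lt (hball : ∀ r, ν (ball 0 r) ≠ ∞)
    (hsphere : ∀ r, ν (sphere 0 r) = 0) (c : ℝ≥0∞) :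
    ν {x | ν (ball 0 ‖x‖) < c} = min c (ν univ) := by
  set T := {r : ℝ | ν (ball 0 r) < c}
  have hT_lower : ∀ {r r' : ℝ}, r' ≤ r → r ∈ T → r' ∈ T :=
    fun hr' hr => (measure_mono (ball_subset_ball hr')).trans_lt hr
  rcases eq_or_ne c 0 with rfl | hc0
  · simp
  by_cases hT : BddAbove T
  · set R := sSup T
    have hT_ne : T.Nonempty := ⟨0, by simp [T, pos_iff_ne_zero.2 hc0]⟩
    have hmem_of_lt : ∀ r < R, r ∈ T := fun r hr => by
      obtain ⟨r', hr', hrr'⟩ := exists_lt_of_lt_csSup hT_ne hr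
      exact hT_lower hrr'.le hr'
    have hball_le : ν (ball 0 R) ≤ c :=
      measure_ball_le_of_forall_lt fun r hr => (hmem_of_lt r hr).le
    have hle_closedBall : c ≤ ν (closedBall 0 R) :=
      le_measure_closedBall_of_forall_gt ⟨R + 1, by linarith, hball _⟩
        fun r hr => not_lt.1 fun h => (le_csSup hT h).not_gt hr
    have hclosedBall_le : ν (closedBall 0 R) ≤ ν (ball 0 R) := by
      rw [← ball_union_sphere]
      exact (measure_union_le _ _).trans (by rw [hsphere, add_zero])
    have hball_sub : ball 0 R ⊆ {x : E | ν (ball 0 ‖x‖) < c} :=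
      fun x hx => hmem_of_lt _ (mem_ball_zero_iff.1 hx)
    have hsub_closedBall : {x : E | ν (ball 0 ‖x‖) < c} ⊆ closedBall 0 R :=
      fun x hx => mem_closedBall_zero_iff.2 (le_csSup hT hx)
    rw [min_eq_left (hle_closedBall.trans (measure_mono (subset_univ _)))]
    exact le_antisymm ((measure_mono hsub_closedBall).trans (hclosedBall_le.trans hball_le))
      (hle_closedBall.trans (hclosedBall_le.trans (measure_mono hball_sub)))
  · have hmem : ∀ r, r ∈ T := fun r => by
      obtain ⟨r', hr', hrr'⟩ := not_bddAbove_iff.1 hT r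
      exact hT_lower hrr'.le hr'
    have huniv_le : ν univ ≤ c := by
      rw [← iUnion_ball_nat 0,
        Monotone.measure_iUnion fun i j hij => ball_subset_ball (Nat.cast_le.2 hij)]
      exact iSup_le fun k => (hmem k).le
    rw [min_eq_right huniv_le,
      eq_univ_of_forall (s := {x : E | ν (ball 0 ‖x‖) < c}) fun x => hmem ‖x‖]

theorem measure_setOf_measure_ball_norm_eq_zero (hball : ∀ r, ν (ball 0 r) ≠ ∞)
    (hsphere : ∀ r, ν (sphere 0 r) = 0) : ν {x | ν (ball 0 ‖x‖) = 0} = 0 := by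
  refine le_antisymm (le_of_forall_gt_imp_ge_of_dense fun ε hε => ?_) zero_le
  calc ν {x | ν (ball 0 ‖x‖) = 0}
      ≤ ν {x | ν (ball 0 ‖x‖) < ε} := measure_mono fun x (hx : _ = 0) => hx.trans_lt hε
    _ = min ε (ν univ) := measure_setOf_measure_ball_norm_lt hball hsphere ε
    _ ≤ ε := min_le_left _ _

theorem le_measure_setOf_measure_ball_norm_mem_Ioo (hball : ∀ r, ν (ball 0 r) ≠ ∞)
    (hsphere : ∀ r, ν (sphere 0 r) = 0) {c : ℝ≥0∞} (hc : c ≤ ν univ) :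
    c ≤ ν {x | ν (ball 0 ‖x‖) ∈ Ioo 0 c} := by
  have hdiff : {x : E | ν (ball 0 ‖x‖) ∈ Ioo 0 c}
      = {x | ν (ball 0 ‖x‖) < c} \ {x | ν (ball 0 ‖x‖) = 0} := by
    ext x
    simp [pos_iff_ne_zero, and_comm]
  rw [hdiff, measure_sdiff_null (measure_setOf_measure_ball_norm_eq_zero hball hsphere),
    measure_setOf_measure_ball_norm_lt hball hsphere, min_eq_left hc]

end RadialBallMass

section WeightedVolume

noncomputable def weightedVolume {E : Type*} [MeasureSpace E] (g : E → ℝ) : Measure E :=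
  volume.withDensity fun x => ENNReal.ofReal (g x)

theorem lintegral_mul_ofReal_eq_lintegral_weightedVolume {E : Type*} [MeasureSpace E]
    {g : E → ℝ} (hg : AEMeasurable g) (F : E → ℝ≥0∞) :
    ∫⁻ x, F x * ENNReal.ofReal (g x) = ∫⁻ x, F x ∂weightedVolume g := by
  rw [weightedVolume, lintegral_withDensity_eq_lintegral_mul_non_measurable₀ _
    hg.ennreal_ofReal (ae_of_all _ fun _ => ENNReal.ofReal_lt_top)]
  simp only [Pi.mul_apply, mul_comm]

theorem weightedVolume_ball_ne_top {E : Type*} [MeasureSpace E] [PseudoMetricSpace E]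
    [ProperSpace E] [OpensMeasurableSpace E] [SFinite (volume : Measure E)] {g : E → ℝ}
    (hg : LocallyIntegrable g) (x : E) (r : ℝ) : weightedVolume g (ball x r) ≠ ∞ := by
  refine ne_top_of_le_ne_top
    (hg.integrableOn_isCompact (isCompact_closedBall x r)).lintegral_lt_top.ne ?_
  rw [weightedVolume, withDensity_apply']
  exact lintegral_mono_set ball_subset_closedBall

theorem weightedVolume_sphere {E : Type*} [NormedAddCommGroup E] [NormedSpace ℝ E]
    [MeasureSpace E] [BorelSpace E] [FiniteDimensional ℝ E]
    [(volume : Measure E).IsAddHaarMeasure] [Nontrivial E] (g : E → ℝ) (x : E) (r : ℝ) :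
    weightedVolume g (sphere x r) = 0 :=
  withDensity_absolutelyContinuous _ _ (Measure.addHaar_sphere volume x r)

end WeightedVolume

section Rearrangement

variable {n : ℕ} {g u : EuclideanSpace ℝ (Fin n) → ℝ}

theorem muG_eq_weightedVolume (A : Set (EuclideanSpace ℝ (Fin n))) :
    muG n g A = weightedVolume g A :=
  (withDensity_apply' _ _).symm

theorem distG_eq_weightedVolume (t : ℝ) : distG n g u t = weightedVolume g {x | t < |u x|} :=
  muG_eq_weightedVolume _

theorem exists_weightedVolume_lt_abs_ne_top (hufin : ∀ t : ℝ, 0 < t → distG n g u t < ⊤) :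
    ∃ t, weightedVolume g {x | t < |u x|} ≠ ∞ :=
  ⟨1, by rw [← distG_eq_weightedVolume]; exact (hufin 1 one_pos).ne⟩

theorem rearrG_eq_decreasingRearrangement (x : EuclideanSpace ℝ (Fin n)) :
    rearrG n g u x = decreasingRearrangement (weightedVolume g) (fun y => |u y|)
      (weightedVolume g (ball 0 ‖x‖)) := by
  simp only [rearrG, distG, muG_eq_weightedVolume]
  rfl

theorem rearrG_nonneg (x : EuclideanSpace ℝ (Fin n)) : 0 ≤ rearrG n g u x :=
  Real.sSup_nonneg fun _ ht => ht.1

theorem lt_rearrG_iff (hu : Measurable u) (hufin : ∀ t : ℝ, 0 < t → distG n g u t < ⊤)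
    {x : EuclideanSpace ℝ (Fin n)} (hx : 0 < weightedVolume g (ball 0 ‖x‖))
    {s : ℝ} (hs : 0 ≤ s) :
    s < rearrG n g u x ↔ weightedVolume g (ball 0 ‖x‖) < weightedVolume g {y | s < |u y|} := by
  rw [rearrG_eq_decreasingRearrangement]
  exact lt_decreasingRearrangement_iff _ hu.abs (exists_weightedVolume_lt_abs_ne_top hufin) hx hs

theorem measurable_rearrG (hu : Measurable u) (hufin : ∀ t : ℝ, 0 < t → distG n g u t < ⊤) :
    Measurable (rearrG n g u) := by
  have hball : Monotone fun r : ℝ => weightedVolume g (ball (0 : EuclideanSpace ℝ (Fin n)) r) :=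
    fun _ _ hrr' => measure_mono (ball_subset_ball hrr')
  rw [funext rearrG_eq_decreasingRearrangement]
  exact (measurable_decreasingRearrangement _ hu.abs
    (exists_weightedVolume_lt_abs_ne_top hufin)).comp (hball.measurable.comp measurable_norm)

theorem weightedVolume_inter_le_rearrG [Nontrivial (EuclideanSpace ℝ (Fin n))]
    {v : EuclideanSpace ℝ (Fin n) → ℝ} (hg : LocallyIntegrable g)
    (hu : Measurable u) (hv : Measurable v)
    (hufin : ∀ t : ℝ, 0 < t → distG n g u t < ⊤) (hvfin : ∀ t : ℝ, 0 < t → distG n g v t < ⊤)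
    {s t : ℝ} (hs : 0 ≤ s) (ht : 0 ≤ t) :
    weightedVolume g ({x | s < |u x|} ∩ {x | t < |v x|})
      ≤ weightedVolume g ({x | s < rearrG n g u x} ∩ {x | t < rearrG n g v x}) := by
  set ν := weightedVolume g
  set c := min (ν {x | s < |u x|}) (ν {x | t < |v x|})
  calc ν ({x | s < |u x|} ∩ {x | t < |v x|})
      ≤ c := le_min (measure_mono inter_subset_left) (measure_mono inter_subset_right)
    _ ≤ ν {x | ν (ball 0 ‖x‖) ∈ Ioo 0 c} :=
      le_measure_setOf_measure_ball_norm_mem_Ioo (weightedVolume_ball_ne_top hg 0)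
        (weightedVolume_sphere g 0) ((min_le_left _ _).trans (measure_mono (subset_univ _)))
    _ ≤ ν ({x | s < rearrG n g u x} ∩ {x | t < rearrG n g v x}) :=
      measure_mono fun x ⟨hx0, hxc⟩ =>
        ⟨(lt_rearrG_iff hu hufin hx0 hs).2 (hxc.trans_le (min_le_left _ _)),
          (lt_rearrG_iff hv hvfin hx0 ht).2 (hxc.trans_le (min_le_right _ _))⟩

end Rearrangement

section DimensionZero

theorem rearrG_fin_zero {g u : EuclideanSpace ℝ (Fin 0) → ℝ} {x : EuclideanSpace ℝ (Fin 0)}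
    (hx : 0 < g x) : rearrG 0 g u x = |u x| := by
  have hdist : ∀ t, 0 < distG 0 g u t ↔ t < |u x| := by
    intro t
    by_cases ht : t < |u x|
    · have huniv : {y | t < |u y|} = univ :=
        eq_univ_of_forall fun y => by rwa [Subsingleton.elim y x]
      simp only [distG, muG, huniv, Measure.restrict_univ, lintegral_unique, ht, iff_true]
      refine ENNReal.mul_pos (ENNReal.ofReal_pos.2 ?_).ne'
        (isOpen_univ.measure_pos volume univ_nonempty).ne'
      convert hx using 2
      exact Subsingleton.elim _ _
    · have hempty : {y | t < |u y|} = ∅ :=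
        eq_empty_of_forall_notMem fun y => by rwa [Subsingleton.elim y x]
      simp [distG, muG, hempty, ht]
  have hIco : {t | 0 ≤ t ∧ muG 0 g (ball 0 ‖x‖) < distG 0 g u t} = Ico 0 |u x| := by
    ext t
    simp [Subsingleton.elim x 0, muG, hdist]
  rw [rearrG, hIco]
  rcases (abs_nonneg (u x)).eq_or_lt with hzero | hpos
  · rw [← hzero, Ico_self, Real.sSup_empty]
  · exact csSup_Ico hpos

theorem lintegral_abs_mul_le_rearrG_fin_zero (g u v : EuclideanSpace ℝ (Fin 0) → ℝ) :
    ∫⁻ x, ENNReal.ofReal |u x * v x| * ENNReal.ofReal (g x) ≤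
      ∫⁻ x, ENNReal.ofReal (rearrG 0 g u x * rearrG 0 g v x) * ENNReal.ofReal (g x) := by
  refine lintegral_mono fun x => ?_
  rcases le_or_gt (g x) 0 with hx | hx
  · simp [ENNReal.ofReal_of_nonpos hx]
  · rw [rearrG_fin_zero hx, rearrG_fin_zero hx, abs_mul]

end DimensionZero

/-- Hardy–Littlewood-type inequality: if `g` is admissible and `u, v` are measurable with
finite distribution functions for every `t > 0`, then
`∫ |u·v| g ≤ ∫ R_g[u]·R_g[v] g`. -/
theorem stmt11 (n : ℕ) (g u v : EuclideanSpace ℝ (Fin n) → ℝ)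
    (hg : Admissible n g) (hu : Measurable u) (hv : Measurable v)
    (hufin : ∀ t : ℝ, 0 < t → distG n g u t < ⊤)
    (hvfin : ∀ t : ℝ, 0 < t → distG n g v t < ⊤) :
    ∫⁻ x, ENNReal.ofReal |u x * v x| * ENNReal.ofReal (g x) ≤
      ∫⁻ x, ENNReal.ofReal (rearrG n g u x * rearrG n g v x) * ENNReal.ofReal (g x) := by
  rcases n.eq_zero_or_pos with rfl | hn
  · exact lintegral_abs_mul_le_rearrG_fin_zero g u v
  obtain ⟨m, rfl⟩ := Nat.exists_eq_add_one_of_ne_zero hn.ne'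
  have hgm : AEMeasurable g := hg.1.aestronglyMeasurable.aemeasurable
  simp_rw [lintegral_mul_ofReal_eq_lintegral_weightedVolume hgm, abs_mul,
    ENNReal.ofReal_mul (abs_nonneg _), ENNReal.ofReal_mul (rearrG_nonneg _)]
  exact lintegral_ofReal_mul_ofReal_le_of_measure_inter_le _ hu.abs hv.abs
    (measurable_rearrG hu hufin) (measurable_rearrG hv hvfin) (fun _ => abs_nonneg _)
    (fun _ => abs_nonneg _) rearrG_nonneg rearrG_nonneg fun s t hs ht =>
      weightedVolume_inter_le_rearrG hg.1 hu hv hufin hvfin hs.le ht.le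
end
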